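/- Let 0 ≤ γ̂(k) ≤ 1 for k in the dual lattice (2π/L)ℤ³, and let γ̂₀(k) = 1/(1 + e^{β(|k|²-μ̃)}) be the Fermi-Dirac occupation numbers. Then for any δ > 0 and P = {k : |k| > k_F + μ̃^{1/2}ρ^δ} with k_F = μ̃^{1/2}: ∑_{k ∈ P} β(|k|²-μ̃)·γ̂(k) ≤ 2·∑_{k ∈ P} s(γ̂(k), γ̂₀(k)) + ∑_{k ∈ P} β(|k|²-μ̃)/(1 + e^{β(|k|²-μ̃)/2}), where s(t,t') = t·ln(t/t') + (1-t)·ln((1-t)/(1-t')). -/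

import Mathlib

open scoped ENNReal

/-- The point `(2π/L)·n` of the dual lattice `(2π/L)ℤ³`. -/
noncomputable def latticePt (L : ℝ) (n : Fin 3 → ℤ) : EuclideanSpace ℝ (Fin 3) :=
  (EuclideanSpace.equiv (Fin 3) ℝ).symm fun i => (2 * Real.pi / L) * (n i)

/-- The pointwise relative entropy `s(t,t')`. -/
noncomputable def relEntropy (t t' : ℝ) : ℝ :=
  t * Real.log (t / t') + (1 - t) * Real.log ((1 - t) / (1 - t'))


lemma jensen_log (a b w₁ w₂ : ℝ) (ha : 0 < a) (hb : 0 < b) (hw₁ : 0 ≤ w₁) (hw₂ : 0 ≤ w₂)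
    (hw : w₁ + w₂ = 1) : w₁ * Real.log a + w₂ * Real.log b ≤ Real.log (w₁ * a + w₂ * b) := by
  have := strictConcaveOn_log_Ioi.concaveOn.2 (Set.mem_Ioi.2 ha) (Set.mem_Ioi.2 hb) hw₁ hw₂ hw
  simpa [smul_eq_mul] using this

lemma gibbs (c s : ℝ) (h0 : 0 ≤ s) (h1 : s ≤ 1) :
    c * s - s * Real.log s - (1 - s) * Real.log (1 - s) ≤ Real.log (1 + Real.exp c) := by
  have he : 0 < Real.exp c := Real.exp_pos c
  rcases eq_or_lt_of_le h0 with h0' | h0'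
  · simp [← h0']
    exact Real.log_nonneg (by linarith)
  rcases eq_or_lt_of_le h1 with h1' | h1'
  · simp [h1']
    calc c = Real.log (Real.exp c) := (Real.log_exp c).symm
    _ ≤ Real.log (1 + Real.exp c) := Real.log_le_log (by positivity) (by linarith)
  have hs1 : 0 < 1 - s := by linarith
  have key := jensen_log (Real.exp c / s) (1 / (1 - s)) s (1 - s) (by positivity) (by positivity)
    h0 (by linarith) (by ring)
  have e1 : Real.log (Real.exp c / s) = c - Real.log s := by
    rw [Real.log_div (Real.exp_ne_zero c) (ne_of_gt h0'), Real.log_exp]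
  have e2 : Real.log (1 / (1 - s)) = - Real.log (1 - s) := by
    rw [one_div, Real.log_inv]
  have e3 : s * (Real.exp c / s) + (1 - s) * (1 / (1 - s)) = Real.exp c + 1 := by
    field_simp
  rw [e1, e2, e3] at key
  calc c * s - s * Real.log s - (1 - s) * Real.log (1 - s)
      = s * (c - Real.log s) + (1 - s) * -Real.log (1 - s) := by ring
    _ ≤ Real.log (Real.exp c + 1) := key
    _ = Real.log (1 + Real.exp c) := by ring_nf

lemma amgm_log (x : ℝ) (hx : 1 ≤ x) :
    x * Real.log x ≤ (1 + x) * Real.log ((1 + x ^ 2) / (1 + x)) := by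
  have hx0 : 0 < x := by linarith
  have h1x : 0 < 1 + x := by linarith
  have key := jensen_log 1 x (1 / (1 + x)) (x / (1 + x)) one_pos hx0 (by positivity)
    (by positivity) (by field_simp)
  have e3 : 1 / (1 + x) * 1 + x / (1 + x) * x = (1 + x ^ 2) / (1 + x) := by
    field_simp
  rw [Real.log_one, mul_zero, zero_add, e3] at key
  have := mul_le_mul_of_nonneg_left key (le_of_lt h1x)
  calc x * Real.log x = (1 + x) * (x / (1 + x) * Real.log x) := by field_simp
    _ ≤ (1 + x) * Real.log ((1 + x ^ 2) / (1 + x)) := this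

lemma key_ineq (h t : ℝ) (hh : 0 < h) (ht0 : 0 ≤ t) (ht1 : t ≤ 1) :
    h * t ≤ 2 * relEntropy t (1 + Real.exp h)⁻¹ + h / (1 + Real.exp (h / 2)) := by
  have he : 0 < Real.exp h := Real.exp_pos h
  have heh : 0 < 1 + Real.exp h := by linarith
  have he2 : 0 < Real.exp (h / 2) := Real.exp_pos _
  have hA : 0 < 1 + Real.exp (h / 2) := by linarith
  -- rewrite relEntropy
  have lg0 : Real.log ((1 + Real.exp h)⁻¹) = - Real.log (1 + Real.exp h) := Real.log_inv _
  have h1t0 : (1 : ℝ) - (1 + Real.exp h)⁻¹ = Real.exp h / (1 + Real.exp h) := by field_simp; ring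
  have lg1 : Real.log (1 - (1 + Real.exp h)⁻¹) = h - Real.log (1 + Real.exp h) := by
    rw [h1t0, Real.log_div (Real.exp_ne_zero h) (ne_of_gt heh), Real.log_exp]
  have part1 : t * Real.log (t / (1 + Real.exp h)⁻¹)
      = t * Real.log t + t * Real.log (1 + Real.exp h) := by
    rcases eq_or_lt_of_le ht0 with h' | h'
    · simp [← h']
    · rw [Real.log_div (ne_of_gt h') (by positivity), lg0]; ring
  have part2 : (1 - t) * Real.log ((1 - t) / (1 - (1 + Real.exp h)⁻¹))
      = (1 - t) * Real.log (1 - t) - (1 - t) * (h - Real.log (1 + Real.exp h)) := by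
    rcases eq_or_lt_of_le ht1 with h' | h'
    · simp [h']
    · rw [Real.log_div (by linarith) (ne_of_gt (h1t0 ▸ (by positivity : (0:ℝ) < Real.exp h / (1 + Real.exp h)))), lg1]
      ring
  have hrel : relEntropy t (1 + Real.exp h)⁻¹
      = t * Real.log t + (1 - t) * Real.log (1 - t)
        + Real.log (1 + Real.exp h) - (1 - t) * h := by
    rw [relEntropy, part1, part2]; ring
  -- Gibbs with c = h/2, s = 1 - t
  have hg := gibbs (h / 2) (1 - t) (by linarith) (by linarith)
  have hg' : h / 2 * (1 - t) - (1 - t) * Real.log (1 - t) - t * Real.log t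
      ≤ Real.log (1 + Real.exp (h / 2)) := by
    have : (1 : ℝ) - (1 - t) = t := by ring
    rw [this] at hg; linarith
  -- AM-GM with x = exp(h/2)
  have hx : 1 ≤ Real.exp (h / 2) := Real.one_le_exp (by linarith)
  have hb := amgm_log (Real.exp (h / 2)) hx
  have hsq : Real.exp (h / 2) ^ 2 = Real.exp h := by
    rw [sq, ← Real.exp_add]; norm_num
  rw [Real.log_exp, hsq, Real.log_div (ne_of_gt heh) (ne_of_gt hA)] at hb
  have hb' : h * Real.exp (h / 2)
      ≤ 2 * (Real.log (1 + Real.exp h) - Real.log (1 + Real.exp (h / 2)))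
        * (1 + Real.exp (h / 2)) := by nlinarith [hb]
  have key2 : h - h / (1 + Real.exp (h / 2))
      ≤ 2 * (Real.log (1 + Real.exp h) - Real.log (1 + Real.exp (h / 2))) := by
    have e : h - h / (1 + Real.exp (h / 2))
        = (h * (1 + Real.exp (h / 2)) - h) / (1 + Real.exp (h / 2)) := by field_simp
    rw [e, div_le_iff₀ hA]
    nlinarith [hb']
  rw [hrel]
  linarith [hg', key2]

/-- With `γ̂ : (2π/L)ℤ³ → [0,1]`, `γ̂₀(k) = (1+e^{β(|k|²-μ̃)})⁻¹` and
`P = {k : |k| > k_F + μ̃^{1/2}ρ^δ}` where `k_F = μ̃^{1/2}`: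
`∑_{k∈P} β(|k|²-μ̃)γ̂(k) ≤ 2∑_{k∈P} s(γ̂(k),γ̂₀(k)) + ∑_{k∈P} β(|k|²-μ̃)/(1+e^{β(|k|²-μ̃)/2})`. -/
theorem stmt13 (β μ ρ δ L : ℝ) (hβ : 0 < β) (hμ : 0 < μ) (hρ : 0 < ρ) (hδ : 0 < δ)
    (hL : 0 < L) (γ : (Fin 3 → ℤ) → ℝ) (hγ : ∀ n, γ n ∈ Set.Icc (0 : ℝ) 1) :
    (∑' n : Fin 3 → ℤ, ENNReal.ofReal
        (if Real.sqrt μ + Real.sqrt μ * ρ ^ δ < ‖latticePt L n‖ then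
          β * (‖latticePt L n‖ ^ 2 - μ) * γ n
        else 0))
      ≤ 2 * (∑' n : Fin 3 → ℤ, ENNReal.ofReal
          (if Real.sqrt μ + Real.sqrt μ * ρ ^ δ < ‖latticePt L n‖ then
            relEntropy (γ n) (1 + Real.exp (β * (‖latticePt L n‖ ^ 2 - μ)))⁻¹
          else 0))
        + ∑' n : Fin 3 → ℤ, ENNReal.ofReal
          (if Real.sqrt μ + Real.sqrt μ * ρ ^ δ < ‖latticePt L n‖ then
            β * (‖latticePt L n‖ ^ 2 - μ) /
              (1 + Real.exp (β * (‖latticePt L n‖ ^ 2 - μ) / 2))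
          else 0) := by
  set c : ℝ := Real.sqrt μ + Real.sqrt μ * ρ ^ δ with hc
  have hpt : ∀ n : Fin 3 → ℤ,
      ENNReal.ofReal (if c < ‖latticePt L n‖ then β * (‖latticePt L n‖ ^ 2 - μ) * γ n else 0)
      ≤ 2 * ENNReal.ofReal (if c < ‖latticePt L n‖ then
            relEntropy (γ n) (1 + Real.exp (β * (‖latticePt L n‖ ^ 2 - μ)))⁻¹ else 0)
        + ENNReal.ofReal (if c < ‖latticePt L n‖ then
            β * (‖latticePt L n‖ ^ 2 - μ) /
              (1 + Real.exp (β * (‖latticePt L n‖ ^ 2 - μ) / 2)) else 0) := by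
    intro n
    by_cases hcond : c < ‖latticePt L n‖
    · simp only [if_pos hcond]
      set h : ℝ := β * (‖latticePt L n‖ ^ 2 - μ) with hdef
      have hsqrt : 0 < Real.sqrt μ := Real.sqrt_pos.mpr hμ
      have hrpow : 0 < ρ ^ δ := Real.rpow_pos_of_pos hρ δ
      have hk : Real.sqrt μ < ‖latticePt L n‖ := by
        have : 0 < Real.sqrt μ * ρ ^ δ := by positivity
        linarith [hcond]
      have hμk : μ < ‖latticePt L n‖ ^ 2 := by
        have := Real.sq_sqrt hμ.le
        nlinarith [hk, hsqrt]
      have hh : 0 < h := mul_pos hβ (by linarith)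
      have hkey := key_ineq h (γ n) hh (hγ n).1 (hγ n).2
      calc ENNReal.ofReal (h * γ n)
          ≤ ENNReal.ofReal (2 * relEntropy (γ n) (1 + Real.exp h)⁻¹
              + h / (1 + Real.exp (h / 2))) := ENNReal.ofReal_le_ofReal hkey
        _ ≤ ENNReal.ofReal (2 * relEntropy (γ n) (1 + Real.exp h)⁻¹)
              + ENNReal.ofReal (h / (1 + Real.exp (h / 2))) := ENNReal.ofReal_add_le
        _ = 2 * ENNReal.ofReal (relEntropy (γ n) (1 + Real.exp h)⁻¹)
              + ENNReal.ofReal (h / (1 + Real.exp (h / 2))) := by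
            rw [ENNReal.ofReal_mul (by norm_num : (0:ℝ) ≤ 2)]
            norm_num
    · simp [if_neg hcond]
  calc (∑' n : Fin 3 → ℤ, ENNReal.ofReal
        (if c < ‖latticePt L n‖ then β * (‖latticePt L n‖ ^ 2 - μ) * γ n else 0))
      ≤ ∑' n : Fin 3 → ℤ,
          (2 * ENNReal.ofReal (if c < ‖latticePt L n‖ then
              relEntropy (γ n) (1 + Real.exp (β * (‖latticePt L n‖ ^ 2 - μ)))⁻¹ else 0)
            + ENNReal.ofReal (if c < ‖latticePt L n‖ then
              β * (‖latticePt L n‖ ^ 2 - μ) /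
                (1 + Real.exp (β * (‖latticePt L n‖ ^ 2 - μ) / 2)) else 0)) :=
        ENNReal.tsum_le_tsum hpt
    _ = _ := by
        rw [ENNReal.tsum_add, ENNReal.tsum_mul_left]
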